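/- For a, v > 0 and r ∈ ℂ with Re(r) < 0, both roots λ of the quadratic λ² + aλ - a v r = 0 have negative real part if and only if a > v·Im(r)²/(-Re(r)). -/
import Mathlib

open Complex

theorem quadratic_roots_neg_re_iff
    (a v : ℝ) (ha : 0 < a) (hv : 0 < v) (r : ℂ) (hr : r.re < 0) :
    (∀ lam : ℂ, lam ^ 2 + (a : ℂ) * lam - (a : ℂ) * (v : ℂ) * r = 0 → lam.re < 0) ↔
      a > v * r.im ^ 2 / (-r.re) := by
  have hre : 0 < -r.re := by linarith
  constructor
  · intro hroots
    by_contra hle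
    push_neg at hle
    have hkey : a * (-r.re) ≤ v * r.im ^ 2 := by
      have := (le_div_iff₀ hre).mp hle
      linarith
    set g : ℝ → ℝ := fun x => (x^2 + a*x - a*v*r.re) * (2*x+a)^2 - a^2*v^2*r.im^2 with hg
    set M : ℝ := v * |r.im| with hM
    have hM0 : 0 ≤ M := by positivity
    have hM2 : M^2 = v^2 * r.im^2 := by
      rw [hM, mul_pow, _root_.sq_abs]
    have hg0 : g 0 ≤ 0 := by
      simp only [hg]
      nlinarith [mul_le_mul_of_nonneg_left hkey (by positivity : (0:ℝ) ≤ a^2*v)]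
    have hgM : 0 ≤ g M := by
      simp only [hg]
      have h1 : M^2 ≤ M^2 + a*M - a*v*r.re := by
        nlinarith [mul_nonneg ha.le hM0, mul_pos (mul_pos ha hv) hre]
      have h2 : a^2 ≤ (2*M+a)^2 := by nlinarith [mul_nonneg ha.le hM0, sq_nonneg M]
      have h3 : M^2 * a^2 ≤ (M^2 + a*M - a*v*r.re) * (2*M+a)^2 :=
        mul_le_mul h1 h2 (by positivity) (by nlinarith [sq_nonneg M])
      nlinarith [h3, hM2]
    have hcont : ContinuousOn g (Set.Icc 0 M) := by fun_prop
    obtain ⟨x, hxmem, hgx⟩ := intermediate_value_Icc hM0 hcont ⟨hg0, hgM⟩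
    have hx0 : 0 ≤ x := hxmem.1
    have hd : 0 < 2*x + a := by linarith
    have hgx' : (x^2 + a*x - a*v*r.re) * (2*x+a)^2 - a^2*v^2*r.im^2 = 0 := hgx
    set y : ℝ := a*v*r.im / (2*x+a) with hy
    have him : y * (2*x+a) = a*v*r.im := by
      rw [hy]; field_simp
    have hre2 : x^2 + a*x - a*v*r.re = y^2 := by
      have hd2 : (2*x+a)^2 ≠ 0 := by positivity
      have h5 : (x^2+a*x-a*v*r.re) * (2*x+a)^2 = y^2 * (2*x+a)^2 := by
        rw [hy]; field_simp; linear_combination hgx'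
      exact mul_right_cancel₀ hd2 h5
    have hroot : (⟨x, y⟩ : ℂ)^2 + (a:ℂ)*⟨x,y⟩ - (a:ℂ)*(v:ℂ)*r = 0 := by
      rw [Complex.ext_iff]
      simp only [pow_two, Complex.add_re, Complex.sub_re, Complex.mul_re, Complex.mul_im,
        Complex.add_im, Complex.sub_im, Complex.ofReal_re, Complex.ofReal_im,
        Complex.zero_re, Complex.zero_im]
      constructor
      · linear_combination hre2
      · linear_combination him
    have := hroots ⟨x, y⟩ hroot
    simp only at this
    linarith
  · intro h lam hlam
    by_contra hx
    push_neg at hx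
    have hkey : v * r.im ^ 2 < a * (-r.re) := by
      have := (div_lt_iff₀ hre).mp h
      linarith
    rw [Complex.ext_iff] at hlam
    simp only [pow_two, Complex.add_re, Complex.sub_re, Complex.mul_re, Complex.mul_im,
      Complex.add_im, Complex.sub_im, Complex.ofReal_re, Complex.ofReal_im,
      Complex.zero_re, Complex.zero_im] at hlam
    obtain ⟨e1, e2⟩ := hlam
    have e2' : lam.im * (2*lam.re + a) = a*v*r.im := by linear_combination e2
    have e3 : (lam.im * (2*lam.re+a))^2 = (a*v*r.im)^2 := by rw [e2']
    have e1' : lam.im^2 = lam.re^2 + a*lam.re - a*v*r.re := by linear_combination -e1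
    have hmul : a^2*v*(v * r.im^2) < a^2*v*(a*(-r.re)) :=
      mul_lt_mul_of_pos_left hkey (by positivity)
    have e4 : (lam.re^2 + a*lam.re - a*v*r.re) * (2*lam.re+a)^2 = a^2*v^2*r.im^2 := by
      linear_combination e3 - (2*lam.re+a)^2 * e1'
    nlinarith [e4, hmul, hx, hre, ha, hv,
      mul_nonneg (mul_nonneg hx hx) (sq_nonneg (2*lam.re+a)),
      mul_nonneg (mul_nonneg ha.le hx) (sq_nonneg (2*lam.re+a)),
      mul_nonneg (mul_nonneg (mul_pos (mul_pos ha hv) hre).le hx) hx,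
      mul_nonneg (mul_nonneg (mul_pos (mul_pos ha hv) hre).le ha.le) hx]
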